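/- arXiv:2512.01347 — 2 statements merged into one kernel-verified Lean document; each statement's English description precedes it below -/
import Mathlib

section
/- Let (γ, ν₁, ν₂) : I → ℝ³ × ℝ³ × ℝ³ and (γ̃, ν̃₁, ν̃₂) : J → ℝ³ × ℝ³ × ℝ³ be framed curves with frame matrix T = (t_ij), and let x(u,v) = γ(u) + γ̃(v) be their translation surface. Suppose there exists a smooth θ : I × J → ℝ such that t₃₂(u,v)·cos θ(u,v) + t₃₁(u,v)·sin θ(u,v) = 0 for all (u,v). Define n(u,v) = sin θ(u,v)·ν₁(u) + cos θ(u,v)·ν₂(u) and μ(u,v) = ν₁(u) × ν₂(u). Then (x, n, μ) : I × J → ℝ³ × ℝ³ × ℝ³ is a framed surface; that is, |n| = |μ| = 1, n·μ = 0, and x_u·n = 0 and x_v·n = 0 on all of I × J. -/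
/-!
Since `γ̃′` is orthogonal to `ν̃₁, ν̃₂`, it equals `α̃ μ̃` with `α̃ = γ̃′ · μ̃`, so
`x_v · n = α̃ (μ̃ · n) = α̃ (t₃₁ sin θ + t₃₂ cos θ) = 0`. The vector `n` lies in the span of
`ν₁, ν₂`, which gives `x_u · n = γ′ · n = 0` and `n · μ = 0`, and `|n| = 1` because
`sin² θ + cos² θ = 1`.
-/

open Matrix Real

noncomputable section

abbrev V3 : Type := Fin 3 → ℝ

def cross3 (a b : V3) : V3 := crossProduct a b

def mu3 (nu1 nu2 : ℝ → V3) (t : ℝ) : V3 := cross3 (nu1 t) (nu2 t)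

/-- A framed curve on a set `I`. -/
def IsFramedCurve (I : Set ℝ) (g nu1 nu2 : ℝ → V3) : Prop :=
  ContDiffOn ℝ (⊤ : ℕ∞) g I ∧ ContDiffOn ℝ (⊤ : ℕ∞) nu1 I ∧ ContDiffOn ℝ (⊤ : ℕ∞) nu2 I ∧
  ∀ t ∈ I, nu1 t ⬝ᵥ nu1 t = 1 ∧ nu2 t ⬝ᵥ nu2 t = 1 ∧ nu1 t ⬝ᵥ nu2 t = 0 ∧
    deriv g t ⬝ᵥ nu1 t = 0 ∧ deriv g t ⬝ᵥ nu2 t = 0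

def curvL (nu1 nu2 : ℝ → V3) (t : ℝ) : ℝ := deriv nu1 t ⬝ᵥ nu2 t
def curvM (nu1 nu2 : ℝ → V3) (t : ℝ) : ℝ := deriv nu1 t ⬝ᵥ mu3 nu1 nu2 t
def curvN (nu1 nu2 : ℝ → V3) (t : ℝ) : ℝ := deriv nu2 t ⬝ᵥ mu3 nu1 nu2 t
def curvA (g nu1 nu2 : ℝ → V3) (t : ℝ) : ℝ := deriv g t ⬝ᵥ mu3 nu1 nu2 t

/-- Frame matrix of two framed curves. -/
def frameMatrix (nu1 nu2 w1 w2 : ℝ → V3) (u v : ℝ) : Matrix (Fin 3) (Fin 3) ℝ :=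
  Matrix.of fun i j => ![w1 v, w2 v, mu3 w1 w2 v] i ⬝ᵥ ![nu1 u, nu2 u, mu3 nu1 nu2 u] j

def det3 (a b c : V3) : ℝ := Matrix.det (Matrix.of ![a, b, c])

def pduV (f : ℝ → ℝ → V3) (u v : ℝ) : V3 := deriv (fun u' => f u' v) u
def pdvV (f : ℝ → ℝ → V3) (u v : ℝ) : V3 := deriv (fun v' => f u v') v
def pduS (f : ℝ → ℝ → ℝ) (u v : ℝ) : ℝ := deriv (fun u' => f u' v) u
def pdvS (f : ℝ → ℝ → ℝ) (u v : ℝ) : ℝ := deriv (fun v' => f u v') v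

/-- `A`-equivalence of the germ of `f` at `p` with the germ of `g` at `0`. -/
def AEquivAt (f : ℝ × ℝ → V3) (p : ℝ × ℝ) (g : ℝ × ℝ → V3) : Prop :=
  ∃ (U : Set (ℝ × ℝ)) (W : Set V3) (φ φi : ℝ × ℝ → ℝ × ℝ) (Ψ Ψi : V3 → V3),
    IsOpen U ∧ p ∈ U ∧ IsOpen W ∧ f p ∈ W ∧ (∀ q ∈ U, f q ∈ W) ∧
    IsOpen (φ '' U) ∧ IsOpen (Ψ '' W) ∧
    ContDiffOn ℝ (⊤ : ℕ∞) φ U ∧ ContDiffOn ℝ (⊤ : ℕ∞) φi (φ '' U) ∧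
    (∀ q ∈ U, φi (φ q) = q) ∧ (∀ q ∈ φ '' U, φ (φi q) = q) ∧
    ContDiffOn ℝ (⊤ : ℕ∞) Ψ W ∧ ContDiffOn ℝ (⊤ : ℕ∞) Ψi (Ψ '' W) ∧
    (∀ y ∈ W, Ψi (Ψ y) = y) ∧ (∀ y ∈ Ψ '' W, Ψ (Ψi y) = y) ∧
    φ p = 0 ∧ Ψ (f p) = g 0 ∧
    ∀ q ∈ U, Ψ (f q) = g (φ q)

def crossCapModel : ℝ × ℝ → V3 := fun p => ![p.1, p.1 * p.2, p.2 ^ 2]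
def S1PlusModel : ℝ × ℝ → V3 := fun p => ![p.1, p.2 ^ 2, p.2 * (p.1 ^ 2 + p.2 ^ 2)]
def S1MinusModel : ℝ × ℝ → V3 := fun p => ![p.1, p.2 ^ 2, p.2 * (p.1 ^ 2 - p.2 ^ 2)]
def cuspidalEdgeModel : ℝ × ℝ → V3 := fun p => ![p.1, p.2 ^ 2, p.2 ^ 3]
def swallowtailModel : ℝ × ℝ → V3 :=
  fun p => ![p.1, 4 * p.2 ^ 3 + 2 * p.1 * p.2, 3 * p.2 ^ 4 + p.1 * p.2 ^ 2]
def cuspidalCrossCapModel : ℝ × ℝ → V3 := fun p => ![p.1, p.2 ^ 2, p.1 * p.2 ^ 3]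
def D4PlusModel : ℝ × ℝ → V3 :=
  fun p => ![p.1 * p.2, p.1 ^ 2 + 3 * p.2 ^ 2, p.1 ^ 2 * p.2 + p.2 ^ 3]
def D4MinusModel : ℝ × ℝ → V3 :=
  fun p => ![p.1 * p.2, p.1 ^ 2 - 3 * p.2 ^ 2, p.1 ^ 2 * p.2 - p.2 ^ 3]

def HasCrossCapAt (f : ℝ × ℝ → V3) (p : ℝ × ℝ) : Prop := AEquivAt f p crossCapModel
def HasS1PlusAt (f : ℝ × ℝ → V3) (p : ℝ × ℝ) : Prop := AEquivAt f p S1PlusModel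
def HasS1MinusAt (f : ℝ × ℝ → V3) (p : ℝ × ℝ) : Prop := AEquivAt f p S1MinusModel
def HasCuspidalEdgeAt (f : ℝ × ℝ → V3) (p : ℝ × ℝ) : Prop := AEquivAt f p cuspidalEdgeModel
def HasSwallowtailAt (f : ℝ × ℝ → V3) (p : ℝ × ℝ) : Prop := AEquivAt f p swallowtailModel
def HasCuspidalCrossCapAt (f : ℝ × ℝ → V3) (p : ℝ × ℝ) : Prop := AEquivAt f p cuspidalCrossCapModel
def HasD4PlusAt (f : ℝ × ℝ → V3) (p : ℝ × ℝ) : Prop := AEquivAt f p D4PlusModel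
def HasD4MinusAt (f : ℝ × ℝ → V3) (p : ℝ × ℝ) : Prop := AEquivAt f p D4MinusModel

/-- A non-degenerate space curve parametrized by arc length on `I`. -/
def IsUnitSpeedNondeg (I : Set ℝ) (g : ℝ → V3) : Prop :=
  ContDiffOn ℝ (⊤ : ℕ∞) g I ∧ (∀ s ∈ I, deriv g s ⬝ᵥ deriv g s = 1) ∧
  ∀ s ∈ I, deriv (deriv g) s ≠ 0

def fcurv (g : ℝ → V3) (s : ℝ) : ℝ := Real.sqrt (deriv (deriv g) s ⬝ᵥ deriv (deriv g) s)
def fnor (g : ℝ → V3) (s : ℝ) : V3 := (fcurv g s)⁻¹ • deriv (deriv g) s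
def fbin (g : ℝ → V3) (s : ℝ) : V3 := cross3 (deriv g s) (fnor g s)
def ftor (g : ℝ → V3) (s : ℝ) : ℝ :=
  det3 (deriv g s) (deriv (deriv g) s) (deriv (deriv (deriv g)) s) / (fcurv g s) ^ 2

/-- Generalised framed surface on `U ⊆ ℝ²`. -/
def IsGeneralisedFramedSurface (U : Set (ℝ × ℝ)) (x N1 N2 : ℝ × ℝ → V3) : Prop :=
  ContDiffOn ℝ (⊤ : ℕ∞) x U ∧ ContDiffOn ℝ (⊤ : ℕ∞) N1 U ∧ ContDiffOn ℝ (⊤ : ℕ∞) N2 U ∧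
  (∀ p ∈ U, N1 p ⬝ᵥ N1 p = 1 ∧ N2 p ⬝ᵥ N2 p = 1 ∧ N1 p ⬝ᵥ N2 p = 0) ∧
  ∃ A B : ℝ × ℝ → ℝ, ContDiffOn ℝ (⊤ : ℕ∞) A U ∧ ContDiffOn ℝ (⊤ : ℕ∞) B U ∧
    ∀ p ∈ U, cross3 (deriv (fun u => x (u, p.2)) p.1) (deriv (fun v => x (p.1, v)) p.2)
      = A p • N1 p + B p • N2 p

/-- Framed surface on `U ⊆ ℝ²`. -/
def IsFramedSurface (U : Set (ℝ × ℝ)) (x nn ss : ℝ × ℝ → V3) : Prop :=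
  ContDiffOn ℝ (⊤ : ℕ∞) x U ∧ ContDiffOn ℝ (⊤ : ℕ∞) nn U ∧ ContDiffOn ℝ (⊤ : ℕ∞) ss U ∧
  ∀ p ∈ U, nn p ⬝ᵥ nn p = 1 ∧ ss p ⬝ᵥ ss p = 1 ∧ nn p ⬝ᵥ ss p = 0 ∧
    deriv (fun u => x (u, p.2)) p.1 ⬝ᵥ nn p = 0 ∧ deriv (fun v => x (p.1, v)) p.2 ⬝ᵥ nn p = 0

/-- The vector field `η = -α̃(v) ∂/∂u + α(u) t₃₃(u,v) ∂/∂v` applied to a map `f`. -/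
def etaD (g nu1 nu2 gt w1 w2 : ℝ → V3) (f : ℝ → ℝ → V3) (u v : ℝ) : V3 :=
  (-(curvA gt w1 w2 v)) • pduV f u v
    + (curvA g nu1 nu2 u * frameMatrix nu1 nu2 w1 w2 u v 2 2) • pdvV f u v

/-- `φ = det(ξx, ηx, ηηx)` for the translation surface `x(u,v) = γ(u) + γ̃(v)`. -/
def phiD (g nu1 nu2 gt w1 w2 : ℝ → V3) (u v : ℝ) : ℝ :=
  det3 (pduV (fun a b => g a + gt b) u v)
    (etaD g nu1 nu2 gt w1 w2 (fun a b => g a + gt b) u v)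
    (etaD g nu1 nu2 gt w1 w2 (etaD g nu1 nu2 gt w1 w2 (fun a b => g a + gt b)) u v)

/-- `n(u,v) = sin θ(u,v) ν₁(u) + cos θ(u,v) ν₂(u)`. -/
def nvecD (nu1 nu2 : ℝ → V3) (θ : ℝ → ℝ → ℝ) (u v : ℝ) : V3 :=
  Real.sin (θ u v) • nu1 u + Real.cos (θ u v) • nu2 u

/-- `t = n × μ`. -/
def tvecD (nu1 nu2 : ℝ → V3) (θ : ℝ → ℝ → ℝ) (u v : ℝ) : V3 :=
  cross3 (nvecD nu1 nu2 θ u v) (mu3 nu1 nu2 u)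

lemma cross3_dot_self_of_orthonormal {a b : V3} (ha : a ⬝ᵥ a = 1) (hb : b ⬝ᵥ b = 1)
    (hab : a ⬝ᵥ b = 0) : cross3 a b ⬝ᵥ cross3 a b = 1 := by
  rw [cross3, cross_dot_cross, ha, hb, hab, dotProduct_comm, hab]
  ring

lemma eq_smul_cross3_of_orthogonal {a b z : V3} (ha : a ⬝ᵥ a = 1) (hb : b ⬝ᵥ b = 1)
    (hab : a ⬝ᵥ b = 0) (hza : z ⬝ᵥ a = 0) (hzb : z ⬝ᵥ b = 0) :
    z = (z ⬝ᵥ cross3 a b) • cross3 a b := by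
  have hm := cross3_dot_self_of_orthonormal ha hb hab
  unfold cross3 at hm ⊢
  have hzm : z ⨯₃ (a ⨯₃ b) = 0 := by
    rw [cross_cross_eq_smul_sub_smul', hzb, dotProduct_comm, hza, zero_smul, zero_smul, sub_zero]
  have h := cross_cross_eq_smul_sub_smul (a ⨯₃ b) z (a ⨯₃ b)
  rw [← cross_anticomm z, hzm, neg_zero, map_zero, LinearMap.zero_apply, hm, one_smul] at h
  exact (sub_eq_zero.mp h.symm)

lemma rotate_dot_self_of_orthonormal {a b : V3} (ha : a ⬝ᵥ a = 1) (hb : b ⬝ᵥ b = 1)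
    (hab : a ⬝ᵥ b = 0) (θ : ℝ) :
    (sin θ • a + cos θ • b) ⬝ᵥ (sin θ • a + cos θ • b) = 1 := by
  simp only [add_dotProduct, dotProduct_add, smul_dotProduct, dotProduct_smul, smul_eq_mul, ha,
    hb, hab, dotProduct_comm b a]
  linear_combination sin_sq_add_cos_sq θ

lemma rotate_dot_cross3 (a b : V3) (s c : ℝ) : (s • a + c • b) ⬝ᵥ cross3 a b = 0 := by
  simp [cross3, add_dotProduct, smul_dotProduct, dot_self_cross, dot_cross_self]

lemma ContDiffOn.cross3 {E : Type*} [NormedAddCommGroup E] [NormedSpace ℝ E] {s : Set E}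
    {n : WithTop ℕ∞} {f h : E → V3} (hf : ContDiffOn ℝ n f s) (hh : ContDiffOn ℝ n h s) :
    ContDiffOn ℝ n (fun p => cross3 (f p) (h p)) s := by
  have hfi := contDiffOn_pi.1 hf
  have hhi := contDiffOn_pi.1 hh
  refine contDiffOn_pi.2 fun i => ?_
  fin_cases i <;>
    · simp only [_root_.cross3, cross_apply]
      exact ((hfi _).mul (hhi _)).sub ((hfi _).mul (hhi _))

namespace IsFramedCurve

variable {I : Set ℝ} {g nu1 nu2 : ℝ → V3} {t : ℝ}

lemma contDiffOn_mu3 (h : IsFramedCurve I g nu1 nu2) : ContDiffOn ℝ (⊤ : ℕ∞) (mu3 nu1 nu2) I :=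
  h.2.1.cross3 h.2.2.1

lemma deriv_eq_curvA_smul_mu3 (h : IsFramedCurve I g nu1 nu2) (ht : t ∈ I) :
    deriv g t = curvA g nu1 nu2 t • mu3 nu1 nu2 t :=
  have ⟨h11, h22, h12, hg1, hg2⟩ := h.2.2.2 t ht
  eq_smul_cross3_of_orthogonal h11 h22 h12 hg1 hg2

end IsFramedCurve

lemma frameMatrix_two_zero (nu1 nu2 w1 w2 : ℝ → V3) (u v : ℝ) :
    frameMatrix nu1 nu2 w1 w2 u v 2 0 = mu3 w1 w2 v ⬝ᵥ nu1 u := rfl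

lemma frameMatrix_two_one (nu1 nu2 w1 w2 : ℝ → V3) (u v : ℝ) :
    frameMatrix nu1 nu2 w1 w2 u v 2 1 = mu3 w1 w2 v ⬝ᵥ nu2 u := rfl

theorem translationSurface_framedSurface_general
    (I J : Set ℝ)
    (g nu1 nu2 gt w1 w2 : ℝ → V3)
    (hg : IsFramedCurve I g nu1 nu2) (hgt : IsFramedCurve J gt w1 w2)
    (θ : ℝ → ℝ → ℝ)
    (hθ : ContDiffOn ℝ (⊤ : ℕ∞) (fun p : ℝ × ℝ => θ p.1 p.2) (I ×ˢ J))
    (hθeq : ∀ u ∈ I, ∀ v ∈ J,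
      frameMatrix nu1 nu2 w1 w2 u v 2 1 * Real.cos (θ u v)
        + frameMatrix nu1 nu2 w1 w2 u v 2 0 * Real.sin (θ u v) = 0) :
    IsFramedSurface (I ×ˢ J) (fun p => g p.1 + gt p.2)
      (fun p => Real.sin (θ p.1 p.2) • nu1 p.1 + Real.cos (θ p.1 p.2) • nu2 p.1)
      (fun p => mu3 nu1 nu2 p.1) := by
  have hfst : Set.MapsTo Prod.fst (I ×ˢ J) I := fun _ hp => hp.1
  have hsnd : Set.MapsTo Prod.snd (I ×ˢ J) J := fun _ hp => hp.2
  refine ⟨(hg.1.comp contDiffOn_fst hfst).add (hgt.1.comp contDiffOn_snd hsnd),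
    ((contDiff_sin.comp_contDiffOn hθ).smul (hg.2.1.comp contDiffOn_fst hfst)).add
      ((contDiff_cos.comp_contDiffOn hθ).smul (hg.2.2.1.comp contDiffOn_fst hfst)),
    hg.contDiffOn_mu3.comp contDiffOn_fst hfst, fun ⟨u, v⟩ ⟨hu, hv⟩ => ?_⟩
  obtain ⟨h11, h22, h12, hg1, hg2⟩ := hg.2.2.2 u hu
  refine ⟨rotate_dot_self_of_orthonormal h11 h22 h12 _,
    cross3_dot_self_of_orthonormal h11 h22 h12, rotate_dot_cross3 _ _ _ _, ?_, ?_⟩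
  · simp only [deriv_add_const, dotProduct_add, dotProduct_smul, hg1, hg2, smul_zero, add_zero]
  · have hμn := hθeq u hu v hv
    rw [frameMatrix_two_zero, frameMatrix_two_one] at hμn
    simp only [deriv_const_add, hgt.deriv_eq_curvA_smul_mu3 hv, smul_dotProduct, dotProduct_add,
      dotProduct_smul, smul_eq_mul]
    linear_combination curvA gt w1 w2 v * hμn

/-- if `t₃₂ cos θ + t₃₁ sin θ = 0` then `(x, n, μ)` is a framed surface. -/
theorem translationSurface_framedSurface
    (I J : Set ℝ) (hI : IsOpen I) (hIc : I.OrdConnected)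
    (hJ : IsOpen J) (hJc : J.OrdConnected)
    (g nu1 nu2 gt w1 w2 : ℝ → V3)
    (hg : IsFramedCurve I g nu1 nu2) (hgt : IsFramedCurve J gt w1 w2)
    (θ : ℝ → ℝ → ℝ)
    (hθ : ContDiffOn ℝ (⊤ : ℕ∞) (fun p : ℝ × ℝ => θ p.1 p.2) (I ×ˢ J))
    (hθeq : ∀ u ∈ I, ∀ v ∈ J,
      frameMatrix nu1 nu2 w1 w2 u v 2 1 * Real.cos (θ u v)
        + frameMatrix nu1 nu2 w1 w2 u v 2 0 * Real.sin (θ u v) = 0) :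
    IsFramedSurface (I ×ˢ J) (fun p => g p.1 + gt p.2)
      (fun p => Real.sin (θ p.1 p.2) • nu1 p.1 + Real.cos (θ p.1 p.2) • nu2 p.1)
      (fun p => mu3 nu1 nu2 p.1) :=
  translationSurface_framedSurface_general I J g nu1 nu2 gt w1 w2 hg hgt θ hθ hθeq

end
end

section
/- Let (γ, ν₁, ν₂) and (γ̃, ν̃₁, ν̃₂) be framed curves with curvatures (ℓ, m, n, α) and (ℓ̃, m̃, ñ, α̃) and frame matrix T = (t_ij). Suppose θ : I × J → ℝ is smooth with t₃₂(u,v) cos θ(u,v) + t₃₁(u,v) sin θ(u,v) = 0 for all (u,v), and let p₀ = (u₀, v₀) be a point with μ(u₀) × μ̃(v₀) = 0. Then the following hold at p₀: (1) m(u₀) sin θ(p₀) + n(u₀) cos θ(p₀) = 0; (2) −(m̃(v₀)t₁₂(p₀) + ñ(v₀)t₂₂(p₀)) cos θ(p₀) − (m̃(v₀)t₁₁(p₀) + ñ(v₀)t₂₁(p₀)) sin θ(p₀) = 0; (3) (ℓ(u₀)n(u₀) + m_u(u₀) − 2n(u₀)θ_u(p₀)) sin θ(p₀) + (−ℓ(u₀)m(u₀)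 + n_u(u₀) + 2m(u₀)θ_u(p₀)) cos θ(p₀) = 0. -/
open Matrix Real

noncomputable section

lemma binet3 (a b x y : V3) :
    cross3 a b ⬝ᵥ cross3 x y = (a ⬝ᵥ x) * (b ⬝ᵥ y) - (a ⬝ᵥ y) * (b ⬝ᵥ x) := by
  simp [cross3, crossProduct, dotProduct, Fin.sum_univ_three]; ring

lemma dot_cross_left (a b : V3) : a ⬝ᵥ cross3 a b = 0 := by
  simp [cross3, crossProduct, dotProduct, Fin.sum_univ_three]; ring

lemma dot_cross_right (a b : V3) : b ⬝ᵥ cross3 a b = 0 := by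
  simp [cross3, crossProduct, dotProduct, Fin.sum_univ_three]; ring

lemma dot_expand {a b : V3} (ha : a ⬝ᵥ a = 1) (hb : b ⬝ᵥ b = 1) (hab : a ⬝ᵥ b = 0)
    (x y : V3) :
    x ⬝ᵥ y = (x ⬝ᵥ a) * (y ⬝ᵥ a) + (x ⬝ᵥ b) * (y ⬝ᵥ b)
      + (x ⬝ᵥ cross3 a b) * (y ⬝ᵥ cross3 a b) := by
  simp only [cross3, crossProduct, dotProduct, Fin.sum_univ_three,
    LinearMap.mk₂_apply, Matrix.cons_val_zero, Matrix.cons_val_one, Matrix.head_cons,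
    Matrix.cons_val_two, Matrix.tail_cons] at *
  linear_combination
    ((x 0*b 0+x 1*b 1+x 2*b 2)*(b 0*y 0+b 1*y 1+b 2*y 2)
      - (x 0*y 0+x 1*y 1+x 2*y 2)*(b 0*b 0+b 1*b 1+b 2*b 2)) * ha
    + ((x 0*a 0+x 1*a 1+x 2*a 2)*(a 0*y 0+a 1*y 1+a 2*y 2)
      - (x 0*y 0+x 1*y 1+x 2*y 2)) * hb
    - ((a 0*x 0+a 1*x 1+a 2*x 2)*(b 0*y 0+b 1*y 1+b 2*y 2)
      + (b 0*x 0+b 1*x 1+b 2*x 2)*(a 0*y 0+a 1*y 1+a 2*y 2)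
      - (x 0*y 0+x 1*y 1+x 2*y 2)*(a 0*b 0+a 1*b 1+a 2*b 2)) * hab

lemma hasDerivAt_dot {x y : ℝ → V3} {x' y' : V3} {u : ℝ}
    (hx : HasDerivAt x x' u) (hy : HasDerivAt y y' u) :
    HasDerivAt (fun t => x t ⬝ᵥ y t) (x' ⬝ᵥ y u + x u ⬝ᵥ y') u := by
  rw [hasDerivAt_pi] at hx hy
  simp only [dotProduct, Fin.sum_univ_three]
  have := (((hx 0).mul (hy 0)).add ((hx 1).mul (hy 1))).add ((hx 2).mul (hy 2))
  exact this.congr_deriv (by ring)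

lemma hasDerivAt_cross {x y : ℝ → V3} {x' y' : V3} {u : ℝ}
    (hx : HasDerivAt x x' u) (hy : HasDerivAt y y' u) :
    HasDerivAt (fun t => cross3 (x t) (y t)) (cross3 x' (y u) + cross3 (x u) y') u := by
  rw [hasDerivAt_pi] at hx hy ⊢
  intro i
  fin_cases i
  · have := ((hx 1).mul (hy 2)).sub ((hx 2).mul (hy 1))
    convert this using 2 <;> simp [cross3, crossProduct] <;> ring
  · have := ((hx 2).mul (hy 0)).sub ((hx 0).mul (hy 2))
    convert this using 2 <;> simp [cross3, crossProduct] <;> ring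
  · have := ((hx 0).mul (hy 1)).sub ((hx 1).mul (hy 0))
    convert this using 2 <;> simp [cross3, crossProduct] <;> ring

lemma myDiffAt {F : Type*} [NormedAddCommGroup F] [NormedSpace ℝ F] {f : ℝ → F}
    {I : Set ℝ} (hI : IsOpen I) (hf : ContDiffOn ℝ (⊤ : ℕ∞) f I) {u : ℝ} (hu : u ∈ I) :
    HasDerivAt f (deriv f u) u :=
  (((hf.differentiableOn (by simp)) u hu).differentiableAt
    (hI.mem_nhds hu)).hasDerivAt

lemma myDeriv {F : Type*} [NormedAddCommGroup F] [NormedSpace ℝ F] {f : ℝ → F}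
    {I : Set ℝ} (hI : IsOpen I) (hf : ContDiffOn ℝ (⊤ : ℕ∞) f I) :
    ContDiffOn ℝ (⊤ : ℕ∞) (deriv f) I :=
  hf.deriv_of_isOpen hI (by exact_mod_cast le_top)

lemma hasDerivAt_zero_of_eqOn {f : ℝ → ℝ} {I : Set ℝ} (hI : IsOpen I) {u : ℝ}
    (hu : u ∈ I) {cst : ℝ} (h : ∀ t ∈ I, f t = cst) : HasDerivAt f 0 u :=
  (hasDerivAt_const u cst).congr_of_eventuallyEq
    (Filter.eventuallyEq_of_mem (hI.mem_nhds hu) h)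

lemma frame_deriv {I : Set ℝ} (hI : IsOpen I) {nu1 nu2 : ℝ → V3}
    (h1 : ContDiffOn ℝ (⊤ : ℕ∞) nu1 I) (h2 : ContDiffOn ℝ (⊤ : ℕ∞) nu2 I)
    (ho : ∀ t ∈ I, nu1 t ⬝ᵥ nu1 t = 1 ∧ nu2 t ⬝ᵥ nu2 t = 1 ∧ nu1 t ⬝ᵥ nu2 t = 0)
    (c : V3) {u : ℝ} (hu : u ∈ I) :
    HasDerivAt (fun t => c ⬝ᵥ nu1 t)
      (curvL nu1 nu2 u * (c ⬝ᵥ nu2 u) + curvM nu1 nu2 u * (c ⬝ᵥ mu3 nu1 nu2 u)) u ∧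
    HasDerivAt (fun t => c ⬝ᵥ nu2 t)
      (-(curvL nu1 nu2 u) * (c ⬝ᵥ nu1 u) + curvN nu1 nu2 u * (c ⬝ᵥ mu3 nu1 nu2 u)) u ∧
    HasDerivAt (fun t => c ⬝ᵥ mu3 nu1 nu2 t)
      (-(curvM nu1 nu2 u) * (c ⬝ᵥ nu1 u) - curvN nu1 nu2 u * (c ⬝ᵥ nu2 u)) u := by
  obtain ⟨e1, e2, e3⟩ := ho u hu
  have hd1 : HasDerivAt nu1 (deriv nu1 u) u := myDiffAt hI h1 hu
  have hd2 : HasDerivAt nu2 (deriv nu2 u) u := myDiffAt hI h2 hu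
  have hdm : HasDerivAt (fun t => mu3 nu1 nu2 t)
      (cross3 (deriv nu1 u) (nu2 u) + cross3 (nu1 u) (deriv nu2 u)) u := by
    simp only [mu3]; exact hasDerivAt_cross hd1 hd2
  have hμμI : ∀ t ∈ I, mu3 nu1 nu2 t ⬝ᵥ mu3 nu1 nu2 t = 1 := fun t ht => by
    obtain ⟨a1, a2, a3⟩ := ho t ht
    simp only [mu3]
    rw [binet3, a1, a2, a3, dotProduct_comm (nu2 t) (nu1 t), a3]; ring
  -- derivative of nu1 ⬝ nu1 = 1
  have k11 : deriv nu1 u ⬝ᵥ nu1 u + nu1 u ⬝ᵥ deriv nu1 u = 0 :=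
    (hasDerivAt_dot hd1 hd1).unique
      (hasDerivAt_zero_of_eqOn hI hu (fun t ht => (ho t ht).1))
  have k11' : deriv nu1 u ⬝ᵥ nu1 u = 0 := by
    rw [dotProduct_comm (nu1 u) (deriv nu1 u)] at k11; linarith
  have k22 : deriv nu2 u ⬝ᵥ nu2 u + nu2 u ⬝ᵥ deriv nu2 u = 0 :=
    (hasDerivAt_dot hd2 hd2).unique
      (hasDerivAt_zero_of_eqOn hI hu (fun t ht => (ho t ht).2.1))
  have k22' : deriv nu2 u ⬝ᵥ nu2 u = 0 := by
    rw [dotProduct_comm (nu2 u) (deriv nu2 u)] at k22; linarith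
  have k12 : deriv nu1 u ⬝ᵥ nu2 u + nu1 u ⬝ᵥ deriv nu2 u = 0 :=
    (hasDerivAt_dot hd1 hd2).unique
      (hasDerivAt_zero_of_eqOn hI hu (fun t ht => (ho t ht).2.2))
  have k21 : deriv nu2 u ⬝ᵥ nu1 u = -(curvL nu1 nu2 u) := by
    rw [dotProduct_comm (deriv nu2 u) (nu1 u)]; simp only [curvL]; linarith
  -- derivative of nu1 ⬝ μ = 0 (identically)
  have hz1 : HasDerivAt (fun t => nu1 t ⬝ᵥ mu3 nu1 nu2 t) 0 u := by
    have hfz : (fun t : ℝ => nu1 t ⬝ᵥ mu3 nu1 nu2 t) = fun _ => (0 : ℝ) :=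
      funext fun t => by simp only [mu3]; exact dot_cross_left _ _
    rw [hfz]; exact hasDerivAt_const u 0
  have hz2 : HasDerivAt (fun t => nu2 t ⬝ᵥ mu3 nu1 nu2 t) 0 u := by
    have hfz : (fun t : ℝ => nu2 t ⬝ᵥ mu3 nu1 nu2 t) = fun _ => (0 : ℝ) :=
      funext fun t => by simp only [mu3]; exact dot_cross_right _ _
    rw [hfz]; exact hasDerivAt_const u 0
  have km1 : deriv nu1 u ⬝ᵥ mu3 nu1 nu2 u
      + nu1 u ⬝ᵥ (cross3 (deriv nu1 u) (nu2 u) + cross3 (nu1 u) (deriv nu2 u)) = 0 :=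
    (hasDerivAt_dot hd1 hdm).unique hz1
  have km2 : deriv nu2 u ⬝ᵥ mu3 nu1 nu2 u
      + nu2 u ⬝ᵥ (cross3 (deriv nu1 u) (nu2 u) + cross3 (nu1 u) (deriv nu2 u)) = 0 :=
    (hasDerivAt_dot hd2 hdm).unique hz2
  have kmm : (cross3 (deriv nu1 u) (nu2 u) + cross3 (nu1 u) (deriv nu2 u)) ⬝ᵥ mu3 nu1 nu2 u
      + mu3 nu1 nu2 u ⬝ᵥ (cross3 (deriv nu1 u) (nu2 u) + cross3 (nu1 u) (deriv nu2 u)) = 0 :=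
    (hasDerivAt_dot hdm hdm).unique (hasDerivAt_zero_of_eqOn hI hu hμμI)
  have km1' : (cross3 (deriv nu1 u) (nu2 u) + cross3 (nu1 u) (deriv nu2 u)) ⬝ᵥ nu1 u
      = -(curvM nu1 nu2 u) := by
    rw [dotProduct_comm]; simp only [curvM]; linarith
  have km2' : (cross3 (deriv nu1 u) (nu2 u) + cross3 (nu1 u) (deriv nu2 u)) ⬝ᵥ nu2 u
      = -(curvN nu1 nu2 u) := by
    rw [dotProduct_comm]; simp only [curvN]; linarith
  have kmm' : (cross3 (deriv nu1 u) (nu2 u) + cross3 (nu1 u) (deriv nu2 u))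
      ⬝ᵥ cross3 (nu1 u) (nu2 u) = 0 := by
    rw [dotProduct_comm (mu3 nu1 nu2 u)] at kmm
    simp only [mu3] at kmm; linarith
  refine ⟨?_, ?_, ?_⟩
  · have hD := hasDerivAt_dot (hasDerivAt_const u c) hd1
    have hveq : curvL nu1 nu2 u * (c ⬝ᵥ nu2 u) + curvM nu1 nu2 u * (c ⬝ᵥ mu3 nu1 nu2 u)
        = (0 : V3) ⬝ᵥ nu1 u + c ⬝ᵥ deriv nu1 u := by
      rw [zero_dotProduct, zero_add, dotProduct_comm c (deriv nu1 u),
        dot_expand e1 e2 e3 (deriv nu1 u) c, k11']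
      simp only [curvL, curvM, mu3]; ring
    rw [hveq]; exact hD
  · have hD := hasDerivAt_dot (hasDerivAt_const u c) hd2
    have hveq : -(curvL nu1 nu2 u) * (c ⬝ᵥ nu1 u) + curvN nu1 nu2 u * (c ⬝ᵥ mu3 nu1 nu2 u)
        = (0 : V3) ⬝ᵥ nu2 u + c ⬝ᵥ deriv nu2 u := by
      rw [zero_dotProduct, zero_add, dotProduct_comm c (deriv nu2 u),
        dot_expand e1 e2 e3 (deriv nu2 u) c, k22', k21]
      simp only [curvN, mu3]; ring
    rw [hveq]; exact hD
  · have hD := hasDerivAt_dot (hasDerivAt_const u c) hdm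
    have hveq : -(curvM nu1 nu2 u) * (c ⬝ᵥ nu1 u) - curvN nu1 nu2 u * (c ⬝ᵥ nu2 u)
        = (0 : V3) ⬝ᵥ mu3 nu1 nu2 u + c ⬝ᵥ (cross3 (deriv nu1 u) (nu2 u)
            + cross3 (nu1 u) (deriv nu2 u)) := by
      rw [zero_dotProduct, zero_add,
        dotProduct_comm c (cross3 (deriv nu1 u) (nu2 u) + cross3 (nu1 u) (deriv nu2 u)),
        dot_expand e1 e2 e3 (cross3 (deriv nu1 u) (nu2 u) + cross3 (nu1 u) (deriv nu2 u)) c,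
        km1', km2', kmm']
      ring
    rw [hveq]; exact hD

/-- relations (1)–(3) of the key lemma at a point with `μ(u₀) × μ̃(v₀) = 0`,
obtained by differentiating `t₃₂ cos θ + t₃₁ sin θ = 0`. -/
theorem lemma_framed_surface_relations
    (I J : Set ℝ) (hI : IsOpen I) (hIc : I.OrdConnected)
    (hJ : IsOpen J) (hJc : J.OrdConnected)
    (g nu1 nu2 gt w1 w2 : ℝ → V3)
    (hg : IsFramedCurve I g nu1 nu2) (hgt : IsFramedCurve J gt w1 w2)
    (θ : ℝ → ℝ → ℝ)
    (hθ : ContDiffOn ℝ (⊤ : ℕ∞) (fun p : ℝ × ℝ => θ p.1 p.2) (I ×ˢ J))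
    (hθeq : ∀ u ∈ I, ∀ v ∈ J,
      frameMatrix nu1 nu2 w1 w2 u v 2 1 * Real.cos (θ u v)
        + frameMatrix nu1 nu2 w1 w2 u v 2 0 * Real.sin (θ u v) = 0)
    (u0 v0 : ℝ) (hu0 : u0 ∈ I) (hv0 : v0 ∈ J)
    (hdep : cross3 (mu3 nu1 nu2 u0) (mu3 w1 w2 v0) = 0) :
    curvM nu1 nu2 u0 * Real.sin (θ u0 v0) + curvN nu1 nu2 u0 * Real.cos (θ u0 v0) = 0 ∧
    (-(curvM w1 w2 v0 * frameMatrix nu1 nu2 w1 w2 u0 v0 0 1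
        + curvN w1 w2 v0 * frameMatrix nu1 nu2 w1 w2 u0 v0 1 1) * Real.cos (θ u0 v0)
      - (curvM w1 w2 v0 * frameMatrix nu1 nu2 w1 w2 u0 v0 0 0
        + curvN w1 w2 v0 * frameMatrix nu1 nu2 w1 w2 u0 v0 1 0) * Real.sin (θ u0 v0) = 0) ∧
    ((curvL nu1 nu2 u0 * curvN nu1 nu2 u0 + deriv (curvM nu1 nu2) u0
        - 2 * curvN nu1 nu2 u0 * pduS θ u0 v0) * Real.sin (θ u0 v0)
      + (-(curvL nu1 nu2 u0 * curvM nu1 nu2 u0) + deriv (curvN nu1 nu2) u0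
        + 2 * curvM nu1 nu2 u0 * pduS θ u0 v0) * Real.cos (θ u0 v0) = 0) := by
  obtain ⟨-, hn1, hn2, hfr⟩ := hg
  obtain ⟨-, hw1s, hw2s, hfrt⟩ := hgt
  have hoI : ∀ t ∈ I, nu1 t ⬝ᵥ nu1 t = 1 ∧ nu2 t ⬝ᵥ nu2 t = 1 ∧ nu1 t ⬝ᵥ nu2 t = 0 :=
    fun t ht => ⟨(hfr t ht).1, (hfr t ht).2.1, (hfr t ht).2.2.1⟩
  have hoJ : ∀ t ∈ J, w1 t ⬝ᵥ w1 t = 1 ∧ w2 t ⬝ᵥ w2 t = 1 ∧ w1 t ⬝ᵥ w2 t = 0 :=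
    fun t ht => ⟨(hfrt t ht).1, (hfrt t ht).2.1, (hfrt t ht).2.2.1⟩
  obtain ⟨e1, e2, e3⟩ := hoI u0 hu0
  obtain ⟨o1, o2, o3⟩ := hoJ v0 hv0
  have hμμ : mu3 nu1 nu2 u0 ⬝ᵥ mu3 nu1 nu2 u0 = 1 := by
    simp only [mu3]
    rw [binet3, e1, e2, e3, dotProduct_comm (nu2 u0) (nu1 u0), e3]; ring
  have hcc : mu3 w1 w2 v0 ⬝ᵥ mu3 w1 w2 v0 = 1 := by
    simp only [mu3]
    rw [binet3, o1, o2, o3, dotProduct_comm (w2 v0) (w1 v0), o3]; ring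
  have hμn1 : mu3 nu1 nu2 u0 ⬝ᵥ nu1 u0 = 0 := by
    rw [dotProduct_comm]; simp only [mu3]; exact dot_cross_left _ _
  have hμn2 : mu3 nu1 nu2 u0 ⬝ᵥ nu2 u0 = 0 := by
    rw [dotProduct_comm]; simp only [mu3]; exact dot_cross_right _ _
  have hzero1 : mu3 w1 w2 v0 ⬝ᵥ nu1 u0 = 0 := by
    have hb := binet3 (mu3 nu1 nu2 u0) (mu3 w1 w2 v0) (mu3 nu1 nu2 u0) (nu1 u0)
    rw [hdep, zero_dotProduct, hμμ, hμn1] at hb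
    linarith
  have hzero2 : mu3 w1 w2 v0 ⬝ᵥ nu2 u0 = 0 := by
    have hb := binet3 (mu3 nu1 nu2 u0) (mu3 w1 w2 v0) (mu3 nu1 nu2 u0) (nu2 u0)
    rw [hdep, zero_dotProduct, hμμ, hμn2] at hb
    linarith
  have hzero1' : nu1 u0 ⬝ᵥ mu3 w1 w2 v0 = 0 := by rw [dotProduct_comm]; exact hzero1
  have hzero2' : nu2 u0 ⬝ᵥ mu3 w1 w2 v0 = 0 := by rw [dotProduct_comm]; exact hzero2
  have hε2 : (mu3 w1 w2 v0 ⬝ᵥ mu3 nu1 nu2 u0) ^ 2 = 1 := by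
    have hexp := dot_expand e1 e2 e3 (mu3 w1 w2 v0) (mu3 w1 w2 v0)
    rw [hcc, hzero1, hzero2] at hexp
    have hm : (mu3 w1 w2 v0 ⬝ᵥ cross3 (nu1 u0) (nu2 u0))
        = mu3 w1 w2 v0 ⬝ᵥ mu3 nu1 nu2 u0 := rfl
    rw [hm] at hexp
    linear_combination -hexp
  have hεne : mu3 w1 w2 v0 ⬝ᵥ mu3 nu1 nu2 u0 ≠ 0 := by
    intro hcon; rw [hcon] at hε2; norm_num at hε2
  have hhI : ContDiffOn ℝ (⊤ : ℕ∞) (fun u => θ u v0) I := by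
    have hmap : ContDiff ℝ (⊤ : ℕ∞) (fun u : ℝ => ((u, v0) : ℝ × ℝ)) :=
      contDiff_id.prodMk contDiff_const
    exact hθ.comp hmap.contDiffOn (fun u hu => Set.mk_mem_prod hu hv0)
  have hkJ : ContDiffOn ℝ (⊤ : ℕ∞) (fun v => θ u0 v) J := by
    have hmap : ContDiff ℝ (⊤ : ℕ∞) (fun v : ℝ => ((u0, v) : ℝ × ℝ)) :=
      contDiff_const.prodMk contDiff_id
    exact hθ.comp hmap.contDiffOn (fun v hv => Set.mk_mem_prod hu0 hv)
  have hFzero : ∀ u ∈ I, (mu3 w1 w2 v0 ⬝ᵥ nu2 u) * Real.cos (θ u v0)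
      + (mu3 w1 w2 v0 ⬝ᵥ nu1 u) * Real.sin (θ u v0) = 0 := fun u hu => by
    simpa [frameMatrix] using hθeq u hu v0 hv0
  obtain ⟨hf1, hf2, hf3⟩ := frame_deriv hI hn1 hn2 hoI (mu3 w1 w2 v0) hu0
  have hh : HasDerivAt (fun u => θ u v0) (deriv (fun u => θ u v0) u0) u0 :=
    myDiffAt hI hhI hu0
  have hcos : HasDerivAt (fun u => Real.cos (θ u v0))
      (-Real.sin (θ u0 v0) * deriv (fun u => θ u v0) u0) u0 :=
    hh.cos
  have hsin : HasDerivAt (fun u => Real.sin (θ u v0))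
      (Real.cos (θ u0 v0) * deriv (fun u => θ u v0) u0) u0 :=
    hh.sin
  have key1 := ((hf2.mul hcos).add (hf1.mul hsin)).unique
    (hasDerivAt_zero_of_eqOn hI hu0 hFzero)
  simp only [hzero1, hzero2, mul_zero, zero_mul, add_zero, zero_add, neg_zero,
    sub_zero] at key1
  refine ⟨?_, ?_, ?_⟩
  · have hp1 : (mu3 w1 w2 v0 ⬝ᵥ mu3 nu1 nu2 u0) *
        (curvM nu1 nu2 u0 * Real.sin (θ u0 v0) + curvN nu1 nu2 u0 * Real.cos (θ u0 v0))
        = 0 := by linear_combination key1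
    rcases mul_eq_zero.mp hp1 with h | h
    · exact absurd h hεne
    · exact h
  · have hFzero2 : ∀ v ∈ J, (nu2 u0 ⬝ᵥ mu3 w1 w2 v) * Real.cos (θ u0 v)
        + (nu1 u0 ⬝ᵥ mu3 w1 w2 v) * Real.sin (θ u0 v) = 0 := fun v hv => by
      have hthis := hθeq u0 hu0 v hv
      simp only [frameMatrix] at hthis
      rw [dotProduct_comm (nu2 u0), dotProduct_comm (nu1 u0)]
      simpa using hthis
    obtain ⟨-, -, hq1⟩ := frame_deriv hJ hw1s hw2s hoJ (nu1 u0) hv0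
    obtain ⟨-, -, hq2⟩ := frame_deriv hJ hw1s hw2s hoJ (nu2 u0) hv0
    have hk : HasDerivAt (fun v => θ u0 v) (deriv (fun v => θ u0 v) v0) v0 :=
      myDiffAt hJ hkJ hv0
    have hcosk : HasDerivAt (fun v => Real.cos (θ u0 v))
        (-Real.sin (θ u0 v0) * deriv (fun v => θ u0 v) v0) v0 :=
      (Real.hasDerivAt_cos (θ u0 v0)).comp v0 hk
    have hsink : HasDerivAt (fun v => Real.sin (θ u0 v))
        (Real.cos (θ u0 v0) * deriv (fun v => θ u0 v) v0) v0 :=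
      (Real.hasDerivAt_sin (θ u0 v0)).comp v0 hk
    have key2 := ((hq2.mul hcosk).add (hq1.mul hsink)).unique
      (hasDerivAt_zero_of_eqOn hJ hv0 hFzero2)
    simp only [hzero1', hzero2', mul_zero, zero_mul, add_zero, zero_add, neg_zero,
      sub_zero] at key2
    have hfm00 : frameMatrix nu1 nu2 w1 w2 u0 v0 0 0 = nu1 u0 ⬝ᵥ w1 v0 := by
      simp [frameMatrix, dotProduct, Fin.sum_univ_three]; ring
    have hfm01 : frameMatrix nu1 nu2 w1 w2 u0 v0 0 1 = nu2 u0 ⬝ᵥ w1 v0 := by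
      simp [frameMatrix, dotProduct, Fin.sum_univ_three]; ring
    have hfm10 : frameMatrix nu1 nu2 w1 w2 u0 v0 1 0 = nu1 u0 ⬝ᵥ w2 v0 := by
      simp [frameMatrix, dotProduct, Fin.sum_univ_three]; ring
    have hfm11 : frameMatrix nu1 nu2 w1 w2 u0 v0 1 1 = nu2 u0 ⬝ᵥ w2 v0 := by
      simp [frameMatrix, dotProduct, Fin.sum_univ_three]; ring
    rw [hfm00, hfm01, hfm10, hfm11]
    linear_combination key2
  · have hGzero : ∀ u ∈ I,
        (-(curvL nu1 nu2 u) * (mu3 w1 w2 v0 ⬝ᵥ nu1 u)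
            + curvN nu1 nu2 u * (mu3 w1 w2 v0 ⬝ᵥ mu3 nu1 nu2 u)) * Real.cos (θ u v0)
        + (curvL nu1 nu2 u * (mu3 w1 w2 v0 ⬝ᵥ nu2 u)
            + curvM nu1 nu2 u * (mu3 w1 w2 v0 ⬝ᵥ mu3 nu1 nu2 u)) * Real.sin (θ u v0)
        + ((mu3 w1 w2 v0 ⬝ᵥ nu1 u) * Real.cos (θ u v0)
            - (mu3 w1 w2 v0 ⬝ᵥ nu2 u) * Real.sin (θ u v0))
            * deriv (fun u => θ u v0) u = 0 := by
      intro u hu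
      obtain ⟨hf1u, hf2u, hf3u⟩ := frame_deriv hI hn1 hn2 hoI (mu3 w1 w2 v0) hu
      have hhu : HasDerivAt (fun u => θ u v0) (deriv (fun u => θ u v0) u) u :=
        myDiffAt hI hhI hu
      have hcosu : HasDerivAt (fun u' => Real.cos (θ u' v0))
          (-Real.sin (θ u v0) * deriv (fun u => θ u v0) u) u :=
        hhu.cos
      have hsinu : HasDerivAt (fun u' => Real.sin (θ u' v0))
          (Real.cos (θ u v0) * deriv (fun u => θ u v0) u) u :=
        hhu.sin
      have keyu := ((hf2u.mul hcosu).add (hf1u.mul hsinu)).unique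
        (hasDerivAt_zero_of_eqOn hI hu hFzero)
      linear_combination keyu
    have hd1 : HasDerivAt nu1 (deriv nu1 u0) u0 := myDiffAt hI hn1 hu0
    have hd2 : HasDerivAt nu2 (deriv nu2 u0) u0 := myDiffAt hI hn2 hu0
    have hdd1 : HasDerivAt (deriv nu1) (deriv (deriv nu1) u0) u0 :=
      myDiffAt hI (myDeriv hI hn1) hu0
    have hdd2 : HasDerivAt (deriv nu2) (deriv (deriv nu2) u0) u0 :=
      myDiffAt hI (myDeriv hI hn2) hu0
    have hdmu : HasDerivAt (fun t => mu3 nu1 nu2 t)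
        (cross3 (deriv nu1 u0) (nu2 u0) + cross3 (nu1 u0) (deriv nu2 u0)) u0 := by
      simp only [mu3]; exact hasDerivAt_cross hd1 hd2
    have hL : HasDerivAt (curvL nu1 nu2) (deriv (curvL nu1 nu2) u0) u0 :=
      (hasDerivAt_dot hdd1 hd2).differentiableAt.hasDerivAt
    have hM : HasDerivAt (curvM nu1 nu2) (deriv (curvM nu1 nu2) u0) u0 :=
      (hasDerivAt_dot hdd1 hdmu).differentiableAt.hasDerivAt
    have hN : HasDerivAt (curvN nu1 nu2) (deriv (curvN nu1 nu2) u0) u0 :=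
      (hasDerivAt_dot hdd2 hdmu).differentiableAt.hasDerivAt
    have hdh : HasDerivAt (deriv (fun u => θ u v0))
        (deriv (deriv (fun u => θ u v0)) u0) u0 :=
      myDiffAt hI (myDeriv hI hhI) hu0
    have bigD := ((((hL.neg.mul hf1).add (hN.mul hf3)).mul hcos).add
        ((((hL.mul hf2)).add (hM.mul hf3)).mul hsin)).add
        (((hf1.mul hcos).sub (hf2.mul hsin)).mul hdh)
    have key3 := bigD.unique (hasDerivAt_zero_of_eqOn hI hu0 hGzero)
    simp only [Pi.mul_apply, Pi.add_apply, Pi.neg_apply, Pi.sub_apply,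
      hzero1, hzero2, mul_zero, zero_mul, add_zero, zero_add, neg_zero,
      sub_zero, zero_sub, zero_add] at key3
    have hp3 : (mu3 w1 w2 v0 ⬝ᵥ mu3 nu1 nu2 u0) *
        ((curvL nu1 nu2 u0 * curvN nu1 nu2 u0 + deriv (curvM nu1 nu2) u0
            - 2 * curvN nu1 nu2 u0 * pduS θ u0 v0) * Real.sin (θ u0 v0)
          + (-(curvL nu1 nu2 u0 * curvM nu1 nu2 u0) + deriv (curvN nu1 nu2) u0
            + 2 * curvM nu1 nu2 u0 * pduS θ u0 v0) * Real.cos (θ u0 v0)) = 0 := by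
      simp only [pduS]
      linear_combination key3
    rcases mul_eq_zero.mp hp3 with h | h
    · exact absurd h hεne
    · exact h

end
end
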